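/- arXiv:2406.19250 — 4 statements merged into one kernel-verified Lean document; each statement's English description precedes it below -/
import Mathlib

section
/- Assume condition (g) and condition (g2). Then for all real numbers a and b, (G(|a|) + G(|b|))/2 ≥ G(|a + b|/2) + G(|a − b|/2). -/
open MeasureTheory Set Real Filter

noncomputable section

/-- The Young function `G(t) = ∫₀ᵗ g(τ) dτ`. -/
def YoungG (g : ℝ → ℝ) (t : ℝ) : ℝ := ∫ τ in (0:ℝ)..t, g τ

/-- Basic structural hypotheses on `g`: right-continuous, non-decreasing on `[0,∞)`,
`g(0) = 0`, `g > 0` on `(0,∞)`, and `g(t) → ∞` as `t → ∞`. -/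
def YoungHyp (g : ℝ → ℝ) : Prop :=
  g 0 = 0 ∧ (∀ t > (0:ℝ), 0 < g t) ∧ MonotoneOn g (Set.Ici 0) ∧
    (∀ t ≥ (0:ℝ), ContinuousWithinAt g (Set.Ici t) t) ∧
    Filter.Tendsto g Filter.atTop Filter.atTop

/-- Condition (g): `1 < q⁻ ≤ t·g(t)/G(t) ≤ q⁺ < ∞` for all `t > 0`. -/
def CondG (g : ℝ → ℝ) (qm qp : ℝ) : Prop :=
  1 < qm ∧ qm ≤ qp ∧
    ∀ t > (0:ℝ), qm ≤ t * g t / YoungG g t ∧ t * g t / YoungG g t ≤ qp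

/-- Condition (g2): `t ↦ G(√t)` is convex on `[0,∞)`. -/
def CondG2 (g : ℝ → ℝ) : Prop :=
  ConvexOn ℝ (Set.Ici (0:ℝ)) (fun t => YoungG g (Real.sqrt t))

/-! Convexity of `t ↦ G(√t)` makes `G(√·)` superadditive, and the parallelogram law
`((a + b)/2)² + ((a - b)/2)² = (a² + b²)/2` turns this, followed by midpoint convexity,
into the inequality. -/

theorem ConvexOn.map_mul_le_of_map_zero_nonpos {f : ℝ → ℝ} (hf : ConvexOn ℝ (Ici 0) f)
    (h0 : f 0 ≤ 0) {x t : ℝ} (hx : 0 ≤ x) (ht₀ : 0 ≤ t) (ht₁ : t ≤ 1) :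
    f (t * x) ≤ t * f x := by
  have := hf.2 (mem_Ici.2 hx) (mem_Ici.2 le_rfl) ht₀ (sub_nonneg.2 ht₁) (add_sub_cancel t 1)
  simp only [smul_eq_mul, mul_zero, add_zero] at this
  linarith [mul_nonpos_of_nonneg_of_nonpos (sub_nonneg.2 ht₁) h0]

theorem ConvexOn.add_le_of_map_zero_nonpos {f : ℝ → ℝ} (hf : ConvexOn ℝ (Ici 0) f)
    (h0 : f 0 ≤ 0) {x y : ℝ} (hx : 0 ≤ x) (hy : 0 ≤ y) :
    f x + f y ≤ f (x + y) := by
  rcases (add_nonneg hx hy).eq_or_lt with hs | hs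
  · obtain ⟨rfl, rfl⟩ : x = 0 ∧ y = 0 := ⟨by linarith, by linarith⟩
    simpa using h0
  have key : ∀ z, 0 ≤ z → z ≤ x + y → f z ≤ z / (x + y) * f (x + y) := fun z hz hzs => by
    simpa [div_mul_cancel₀ z hs.ne'] using
      hf.map_mul_le_of_map_zero_nonpos h0 hs.le (div_nonneg hz hs.le)
        ((div_le_one hs).2 hzs)
  calc f x + f y ≤ x / (x + y) * f (x + y) + y / (x + y) * f (x + y) :=
        add_le_add (key x hx (by linarith)) (key y hy (by linarith))
    _ = f (x + y) := by rw [← add_mul, ← add_div, div_self hs.ne', one_mul]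

theorem add_le_of_convexOn_comp_sqrt {F : ℝ → ℝ}
    (hF : ConvexOn ℝ (Ici 0) (fun t => F √t)) (h0 : F 0 ≤ 0) (a b : ℝ) :
    F (|a + b| / 2) + F (|a - b| / 2) ≤ (F |a| + F |b|) / 2 := by
  have h0' : F √0 ≤ 0 := by simpa using h0
  have half_abs : ∀ c : ℝ, |c| / 2 = √((c / 2) ^ 2) := fun c => by
    rw [Real.sqrt_sq_eq_abs, abs_div, abs_two]
  have abs_eq : ∀ c : ℝ, |c| = √(c ^ 2) := fun c => (Real.sqrt_sq_eq_abs c).symm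
  have parallelogram :
      ((a + b) / 2) ^ 2 + ((a - b) / 2) ^ 2 = (1 / 2 : ℝ) • a ^ 2 + (1 / 2 : ℝ) • b ^ 2 := by
    simp only [smul_eq_mul]; ring
  rw [half_abs, half_abs, abs_eq a, abs_eq b]
  calc F (√(((a + b) / 2) ^ 2)) + F (√(((a - b) / 2) ^ 2))
      ≤ F (√(((a + b) / 2) ^ 2 + ((a - b) / 2) ^ 2)) :=
        hF.add_le_of_map_zero_nonpos h0' (sq_nonneg _) (sq_nonneg _)
    _ ≤ (1 / 2 : ℝ) • F (√(a ^ 2)) + (1 / 2 : ℝ) • F (√(b ^ 2)) := by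
        rw [parallelogram]
        exact hF.2 (mem_Ici.2 (sq_nonneg a)) (mem_Ici.2 (sq_nonneg b)) (by norm_num) (by norm_num)
          (by norm_num)
    _ = (F (√(a ^ 2)) + F (√(b ^ 2))) / 2 := by simp only [smul_eq_mul]; ring

theorem statement3_general
    (g : ℝ → ℝ) (hg2 : CondG2 g) :
    ∀ a b : ℝ,
      YoungG g (|a + b| / 2) + YoungG g (|a - b| / 2) ≤
        (YoungG g |a| + YoungG g |b|) / 2 :=
  add_le_of_convexOn_comp_sqrt hg2 intervalIntegral.integral_same.le

/-- Lemma 2.1: the convexity inequality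
`(G(|a|) + G(|b|))/2 ≥ G(|a+b|/2) + G(|a−b|/2)`. -/
theorem statement3
    (g : ℝ → ℝ) (hg : YoungHyp g)
    (qm qp : ℝ) (hcondg : CondG g qm qp) (hg2 : CondG2 g) :
    ∀ a b : ℝ,
      YoungG g (|a + b| / 2) + YoungG g (|a - b| / 2) ≤
        (YoungG g |a| + YoungG g |b|) / 2 :=
  statement3_general g hg2
end
end

section
/- Assume condition (g) with 2 ≤ q⁻ ≤ q⁺ < p for some real p > 2, condition (g2), and that G is differentiable on (0,∞) with G' = g. Let u, v : ℝ^N → ℝ be measurable with ρ(u) < ∞, ρ(v) < ∞ and u|_{B₁}, v|_{B₁} ∈ L²(B₁) ∩ L^p(B₁). Assume: (A) ρ(v) + (1/2)∫_{B₁} v² dx − ρ(u) − (1/2)∫_{B₁} u² dx ≥ ∫_{B₁} |u|^(p−2)·u·(v − u) dx; and (B) the integral ∬_Q g(|v(x)−v(y)|/|x−y|^s)·sgn(v(x)−v(y))·((v−u)(x)−(v−u)(y))·|x−y|^(−s−N) dx dy converges absolutely and ∬_Q g(|v(x)−v(y)|/|x−y|^s)·sgn(v(x)−v(y))·((v−u)(x)−(v−u)(y))·|x−y|^(−s−N)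 dx dy + ∫_{B₁} v·(v−u) dx = ∫_{B₁} |u|^(p−2)·u·(v−u) dx. Then u = v almost everywhere in B₁. -/
open MeasureTheory Set Real Filter
open scoped ENNReal

noncomputable section

/-- `ℝ^N`. -/
abbrev Euc (N : ℕ) : Type := EuclideanSpace ℝ (Fin N)

/-- The open unit ball of `ℝ^N`. -/
def B1 (N : ℕ) : Set (Euc N) := Metric.ball 0 1

/-- `Q = ℝ^{2N} \ (B₁ᶜ × B₁ᶜ)`. -/
def Qset (N : ℕ) : Set (Euc N × Euc N) := {z : Euc N × Euc N | z.1 ∈ B1 N ∨ z.2 ∈ B1 N}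

/-- The modular `ρ(u) = ∬_Q G(|u(x)−u(y)|/|x−y|^s)·|x−y|^(−N) dx dy`. -/
def rho (N : ℕ) (s : ℝ) (g : ℝ → ℝ) (u : Euc N → ℝ) : ℝ≥0∞ :=
  ∫⁻ z in Qset N,
    ENNReal.ofReal (YoungG g (|u z.1 - u z.2| / dist z.1 z.2 ^ s) * dist z.1 z.2 ^ (-(N : ℝ)))

/-- The integrand `g(|u(x)−u(y)|/|x−y|^s)·sgn(u(x)−u(y))·(φ(x)−φ(y))·|x−y|^(−s−N)`. -/
def weakKernel (N : ℕ) (s : ℝ) (g : ℝ → ℝ) (u φ : Euc N → ℝ) (z : Euc N × Euc N) : ℝ :=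
  g (|u z.1 - u z.2| / dist z.1 z.2 ^ s) * Real.sign (u z.1 - u z.2) *
    (φ z.1 - φ z.2) * dist z.1 z.2 ^ (-s - (N : ℝ))

/-- A function on `ℝ^N` is radial if its value depends only on `|x|`. -/
def IsRadial (N : ℕ) (u : Euc N → ℝ) : Prop := ∀ x y : Euc N, ‖x‖ = ‖y‖ → u x = u y

/-- `u` is a weak solution of `(−Δ_g)^s u + u = |u|^{p−2} u` in `B₁` with the nonlocal
Neumann condition, tested against all measurable radial `φ` with finite modular whose
restriction to `B₁` lies in `L² ∩ L^p`. -/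
def IsWeakSolution (N : ℕ) (s p : ℝ) (g : ℝ → ℝ) (u : Euc N → ℝ) : Prop :=
  ∀ φ : Euc N → ℝ, Measurable φ → IsRadial N φ →
    rho N s g φ < ⊤ →
    MemLp φ 2 (volume.restrict (B1 N)) →
    MemLp φ (ENNReal.ofReal p) (volume.restrict (B1 N)) →
    IntegrableOn (weakKernel N s g u φ) (Qset N) ∧
      ∫ z in Qset N, weakKernel N s g u φ z =
        ∫ x in B1 N, (|u x| ^ (p - 2) * u x - u x) * φ x

/-!
Since `g` is non-decreasing, `G` is convex: `G(b) - G(a) ≤ g(b)(b - a)` for `a, b ≥ 0`.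
Together with `|b| - |a| ≤ sgn(b)(b - a)` this shows that the kernel in (B) integrates to a
subgradient of the modular at `v`, i.e. `ρ(v) - ρ(u) ≤ ∬_Q kernel`. Substituting this and (B)
into (A) leaves `½ ∫_{B₁} (u - v)² ≤ 0`.
-/

section YoungFunction

variable {g : ℝ → ℝ}

lemma intervalIntegrable_of_monotoneOn_Ici (hgmono : MonotoneOn g (Ici 0)) {a b : ℝ}
    (ha : 0 ≤ a) (hb : 0 ≤ b) : IntervalIntegrable g volume a b :=
  (hgmono.mono fun _ hx ↦ (le_min ha hb).trans hx.1).intervalIntegrable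

lemma youngG_sub_youngG (hgmono : MonotoneOn g (Ici 0)) {a b : ℝ} (ha : 0 ≤ a) (hb : 0 ≤ b) :
    YoungG g b - YoungG g a = ∫ t in a..b, g t :=
  intervalIntegral.integral_interval_sub_left
    (intervalIntegrable_of_monotoneOn_Ici hgmono le_rfl hb)
    (intervalIntegrable_of_monotoneOn_Ici hgmono le_rfl ha)

lemma youngG_sub_youngG_le (hgmono : MonotoneOn g (Ici 0)) {a b : ℝ} (ha : 0 ≤ a)
    (hb : 0 ≤ b) : YoungG g b - YoungG g a ≤ g b * (b - a) := by
  rw [youngG_sub_youngG hgmono ha hb]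
  rcases le_total a b with hab | hba
  · calc ∫ t in a..b, g t ≤ ∫ _ in a..b, g b :=
          intervalIntegral.integral_mono_on hab
            (intervalIntegrable_of_monotoneOn_Ici hgmono ha hb) intervalIntegrable_const
            fun t ht ↦ hgmono (ha.trans ht.1) hb ht.2
      _ = g b * (b - a) := by simp [mul_comm]
  · calc ∫ t in a..b, g t = -∫ t in b..a, g t := intervalIntegral.integral_symm b a
      _ ≤ -∫ _ in b..a, g b := neg_le_neg <|
          intervalIntegral.integral_mono_on hba intervalIntegrable_const
            (intervalIntegrable_of_monotoneOn_Ici hgmono hb ha)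
            fun t ht ↦ hgmono hb (hb.trans ht.1) ht.1
      _ = g b * (b - a) := by simp; ring

lemma monotoneOn_youngG (hg0 : g 0 = 0) (hgmono : MonotoneOn g (Ici 0)) :
    MonotoneOn (YoungG g) (Ici 0) := by
  intro a ha b hb hab
  rw [← sub_nonneg, youngG_sub_youngG hgmono ha hb]
  exact intervalIntegral.integral_nonneg hab fun t ht ↦
    hg0 ▸ hgmono self_mem_Ici (mem_Ici.2 (le_trans ha ht.1)) (le_trans ha ht.1)

lemma youngG_nonneg (hg0 : g 0 = 0) (hgmono : MonotoneOn g (Ici 0)) {t : ℝ} (ht : 0 ≤ t) :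
    0 ≤ YoungG g t := by
  simpa [YoungG] using monotoneOn_youngG hg0 hgmono self_mem_Ici ht ht

lemma measurable_youngG_comp {α : Type*} [MeasurableSpace α] (hg0 : g 0 = 0)
    (hgmono : MonotoneOn g (Ici 0)) {f : α → ℝ} (hf : Measurable f) (hf0 : ∀ x, 0 ≤ f x) :
    Measurable fun x ↦ YoungG g (f x) := by
  have hmono : Monotone fun t ↦ YoungG g (max t 0) := fun a b hab ↦
    monotoneOn_youngG hg0 hgmono (le_max_right a 0) (le_max_right b 0) (max_le_max_right 0 hab)
  convert hmono.measurable.comp hf using 2 with x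
  simp [max_eq_left (hf0 x)]

end YoungFunction

lemma abs_sub_abs_le_sign_mul_sub (a b : ℝ) : |b| - |a| ≤ Real.sign b * (b - a) := by
  rcases lt_trichotomy b 0 with hb | rfl | hb
  · rw [Real.sign_of_neg hb, abs_of_neg hb]; linarith [neg_abs_le a]
  · simp
  · rw [Real.sign_of_pos hb, abs_of_pos hb]; linarith [le_abs_self a]

lemma youngG_div_sub_youngG_div_le {g : ℝ → ℝ} (hg0 : g 0 = 0) (hgmono : MonotoneOn g (Ici 0))
    {c : ℝ} (hc : 0 < c) (a b : ℝ) :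
    YoungG g (|b| / c) - YoungG g (|a| / c) ≤ g (|b| / c) * Real.sign b * (b - a) / c := by
  have hB : 0 ≤ |b| / c := by positivity
  calc YoungG g (|b| / c) - YoungG g (|a| / c) ≤ g (|b| / c) * (|b| / c - |a| / c) :=
        youngG_sub_youngG_le hgmono (by positivity) hB
    _ = g (|b| / c) * (|b| - |a|) / c := by ring
    _ ≤ g (|b| / c) * (Real.sign b * (b - a)) / c := by
        gcongr
        · exact hg0 ▸ hgmono self_mem_Ici hB hB
        · exact abs_sub_abs_le_sign_mul_sub a b
    _ = g (|b| / c) * Real.sign b * (b - a) / c := by ring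

def modularIntegrand (N : ℕ) (s : ℝ) (g : ℝ → ℝ) (u : Euc N → ℝ)
    (z : Euc N × Euc N) : ℝ :=
  YoungG g (|u z.1 - u z.2| / dist z.1 z.2 ^ s) * dist z.1 z.2 ^ (-(N : ℝ))

section Modular

variable {N : ℕ} {s : ℝ} {g : ℝ → ℝ}

lemma modularIntegrand_nonneg (hg0 : g 0 = 0) (hgmono : MonotoneOn g (Ici 0))
    (u : Euc N → ℝ) (z : Euc N × Euc N) :
    0 ≤ modularIntegrand N s g u z :=
  mul_nonneg (youngG_nonneg hg0 hgmono (by positivity)) (by positivity)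

lemma measurable_modularIntegrand (hg0 : g 0 = 0) (hgmono : MonotoneOn g (Ici 0))
    {u : Euc N → ℝ} (hu : Measurable u) :
    Measurable (modularIntegrand N s g u) := by
  refine (measurable_youngG_comp hg0 hgmono ?_ fun _ ↦ by positivity).mul
    (measurable_dist.pow_const _)
  exact ((hu.comp measurable_fst).sub (hu.comp measurable_snd)).abs.div
    (measurable_dist.pow_const _)

lemma toReal_rho (hg0 : g 0 = 0) (hgmono : MonotoneOn g (Ici 0)) {u : Euc N → ℝ}
    (hu : Measurable u) :
    (rho N s g u).toReal = ∫ z in Qset N, modularIntegrand N s g u z := by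
  rw [integral_eq_lintegral_of_nonneg_ae
    (.of_forall (modularIntegrand_nonneg hg0 hgmono u))
    (measurable_modularIntegrand hg0 hgmono hu).aestronglyMeasurable]
  rfl

lemma integrableOn_modularIntegrand (hg0 : g 0 = 0) (hgmono : MonotoneOn g (Ici 0))
    {u : Euc N → ℝ} (hu : Measurable u) (hρ : rho N s g u < ⊤) :
    IntegrableOn (modularIntegrand N s g u) (Qset N) :=
  ⟨(measurable_modularIntegrand hg0 hgmono hu).aestronglyMeasurable,
    (hasFiniteIntegral_iff_ofReal (.of_forall (modularIntegrand_nonneg hg0 hgmono u))).2 hρ⟩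

lemma modularIntegrand_sub_le_weakKernel (hg0 : g 0 = 0) (hgmono : MonotoneOn g (Ici 0))
    (u v : Euc N → ℝ) (z : Euc N × Euc N) :
    modularIntegrand N s g v z - modularIntegrand N s g u z ≤
      weakKernel N s g v (fun x ↦ v x - u x) z := by
  obtain ⟨x, y⟩ := z
  rcases (dist_nonneg : 0 ≤ dist x y).eq_or_lt with hd | hd
  · obtain rfl : x = y := dist_eq_zero.1 hd.symm
    simp [modularIntegrand, weakKernel, YoungG]
  · have hsplit : dist x y ^ (-s - N) = (dist x y ^ s)⁻¹ * dist x y ^ (-(N : ℝ)) := by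
      rw [← Real.rpow_neg hd.le, ← Real.rpow_add hd, sub_eq_add_neg]
    have key := mul_le_mul_of_nonneg_right
      (youngG_div_sub_youngG_div_le hg0 hgmono (Real.rpow_pos_of_pos hd s)
        (u x - u y) (v x - v y))
      (Real.rpow_nonneg hd.le (-(N : ℝ)))
    simp only [modularIntegrand, weakKernel, hsplit]
    calc _ = _ := by ring
      _ ≤ _ := key
      _ = _ := by ring

lemma toReal_rho_sub_toReal_rho_le (hg0 : g 0 = 0) (hgmono : MonotoneOn g (Ici 0))
    {u v : Euc N → ℝ} (hu : Measurable u) (hv : Measurable v)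
    (hru : rho N s g u < ⊤) (hrv : rho N s g v < ⊤)
    (hint : IntegrableOn (weakKernel N s g v (fun x ↦ v x - u x)) (Qset N)) :
    (rho N s g v).toReal - (rho N s g u).toReal ≤
      ∫ z in Qset N, weakKernel N s g v (fun x ↦ v x - u x) z := by
  rw [toReal_rho hg0 hgmono hu, toReal_rho hg0 hgmono hv,
    ← integral_sub (integrableOn_modularIntegrand hg0 hgmono hv hrv)
      (integrableOn_modularIntegrand hg0 hgmono hu hru)]
  exact integral_mono ((integrableOn_modularIntegrand hg0 hgmono hv hrv).sub
    (integrableOn_modularIntegrand hg0 hgmono hu hru)) hint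
    (modularIntegrand_sub_le_weakKernel hg0 hgmono u v)

end Modular

section SquareIntegrable

variable {α : Type*} [MeasurableSpace α] {μ : Measure α} {f h : α → ℝ}

lemma integral_sub_sq_eq (hf : MemLp f 2 μ) (hh : MemLp h 2 μ) :
    ∫ x, (f x - h x) ^ 2 ∂μ =
      2 * ∫ x, h x * (h x - f x) ∂μ - ∫ x, h x ^ 2 ∂μ + ∫ x, f x ^ 2 ∂μ := by
  have hhf : Integrable (fun x ↦ h x * (h x - f x)) μ := hh.integrable_mul (hh.sub hf)
  calc ∫ x, (f x - h x) ^ 2 ∂μ = ∫ x, (2 * (h x * (h x - f x)) - h x ^ 2 + f x ^ 2) ∂μ :=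
        integral_congr_ae (.of_forall fun x ↦ by ring)
    _ = _ := by
        rw [integral_add ?_ hf.integrable_sq, integral_sub ?_ hh.integrable_sq,
          integral_const_mul]
        exacts [hhf.const_mul 2, (hhf.const_mul 2).sub hh.integrable_sq]

lemma ae_eq_of_integral_sub_sq_nonpos (hf : MemLp f 2 μ) (hh : MemLp h 2 μ)
    (H : ∫ x, (f x - h x) ^ 2 ∂μ ≤ 0) : f =ᵐ[μ] h := by
  have hzero := (integral_eq_zero_iff_of_nonneg (fun x ↦ sq_nonneg (f x - h x))
    (hf.sub hh).integrable_sq).1 (H.antisymm (integral_nonneg fun x ↦ sq_nonneg _))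
  filter_upwards [hzero] with x hx
  exact sub_eq_zero.1 (pow_eq_zero_iff two_ne_zero |>.1 hx)

end SquareIntegrable

theorem statement11_general
    (N : ℕ) (s : ℝ)
    (g : ℝ → ℝ) (hg : YoungHyp g)
    (p : ℝ)
    (u v : Euc N → ℝ) (hu : Measurable u) (hv : Measurable v)
    (hru : rho N s g u < ⊤) (hrv : rho N s g v < ⊤)
    (huL2 : MemLp u 2 (volume.restrict (B1 N)))
    (hvL2 : MemLp v 2 (volume.restrict (B1 N)))
    (hA : (∫ x in B1 N, |u x| ^ (p - 2) * u x * (v x - u x)) ≤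
      (rho N s g v).toReal + (1/2) * (∫ x in B1 N, (v x) ^ 2) -
        (rho N s g u).toReal - (1/2) * (∫ x in B1 N, (u x) ^ 2))
    (hBint : IntegrableOn (weakKernel N s g v (fun x => v x - u x)) (Qset N))
    (hB : (∫ z in Qset N, weakKernel N s g v (fun x => v x - u x) z) +
        (∫ x in B1 N, v x * (v x - u x)) =
      ∫ x in B1 N, |u x| ^ (p - 2) * u x * (v x - u x)) :
    ∀ᵐ x ∂(volume.restrict (B1 N)), u x = v x := by
  obtain ⟨hg0, -, hgmono, -, -⟩ := hg
  have hconvex := toReal_rho_sub_toReal_rho_le hg0 hgmono hu hv hru hrv hBint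
  have hsq := integral_sub_sq_eq huL2 hvL2
  exact ae_eq_of_integral_sub_sq_nonpos huL2 hvL2 (by linarith)

/-- core of Theorem 3.1: if `u` satisfies the critical-point
inequality (A) and `v` solves the linearized problem (B), then `u = v` a.e. in `B₁`. -/
theorem statement11
    (N : ℕ) (hN : 2 ≤ N) (s : ℝ) (hs : s ∈ Set.Ioo (0:ℝ) 1)
    (g : ℝ → ℝ) (hg : YoungHyp g)
    (p qm qp : ℝ) (hcondg : CondG g qm qp)
    (hqm : 2 ≤ qm) (hqmqp : qm ≤ qp) (hqpp : qp < p) (hp : 2 < p)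
    (hg2 : CondG2 g)
    (hderiv : ∀ t > (0:ℝ), HasDerivAt (YoungG g) (g t) t)
    (u v : Euc N → ℝ) (hu : Measurable u) (hv : Measurable v)
    (hru : rho N s g u < ⊤) (hrv : rho N s g v < ⊤)
    (huL2 : MemLp u 2 (volume.restrict (B1 N)))
    (huLp : MemLp u (ENNReal.ofReal p) (volume.restrict (B1 N)))
    (hvL2 : MemLp v 2 (volume.restrict (B1 N)))
    (hvLp : MemLp v (ENNReal.ofReal p) (volume.restrict (B1 N)))
    (hA : (∫ x in B1 N, |u x| ^ (p - 2) * u x * (v x - u x)) ≤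
      (rho N s g v).toReal + (1/2) * (∫ x in B1 N, (v x) ^ 2) -
        (rho N s g u).toReal - (1/2) * (∫ x in B1 N, (u x) ^ 2))
    (hBint : IntegrableOn (weakKernel N s g v (fun x => v x - u x)) (Qset N))
    (hB : (∫ z in Qset N, weakKernel N s g v (fun x => v x - u x) z) +
        (∫ x in B1 N, v x * (v x - u x)) =
      ∫ x in B1 N, |u x| ^ (p - 2) * u x * (v x - u x)) :
    ∀ᵐ x ∂(volume.restrict (B1 N)), u x = v x :=
  statement11_general N s g hg p u v hu hv hru hrv huL2 hvL2 hA hBint hB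
end
end

section
/- Assume condition (g) and condition (g2). Then for all measurable u, v : ℝ^N → ℝ: ρ((u+v)/2) + ρ((u−v)/2) ≤ (ρ(u) + ρ(v))/2 (as an inequality of values in [0,∞]). -/
open MeasureTheory Set Real Filter
open scoped ENNReal

noncomputable section

/-! Write `G(|x|) = H(x²)` with `H(t) = G(√t)`, convex on `[0,∞)` by (g2) and `H(0) = 0`, hence
superadditive there. Since `((a+b)/2)² + ((a−b)/2)² = (a²+b²)/2`, superadditivity followed by
midpoint convexity gives `G(|(a+b)/2|) + G(|(a−b)/2|) ≤ (G(|a|) + G(|b|))/2`. Taking for `a`,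
`b` the difference quotients of `u`, `v` at `(x, y)` and integrating over `Q` gives the claim. -/

theorem ConvexOn.map_smul_le_of_map_zero {𝕜 E β : Type*} [Ring 𝕜] [PartialOrder 𝕜]
    [IsOrderedRing 𝕜] [AddCommMonoid E] [AddCommMonoid β] [PartialOrder β]
    [IsOrderedAddMonoid β] [Module 𝕜 E] [Module 𝕜 β] {s : Set E} {f : E → β}
    (hf : ConvexOn 𝕜 s f) (h0s : (0 : E) ∈ s) (hf0 : f 0 = 0) {x : E} (hx : x ∈ s) {t : 𝕜}
    (ht0 : 0 ≤ t) (ht1 : t ≤ 1) : f (t • x) ≤ t • f x := by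
  simpa [hf0] using hf.2 hx h0s ht0 (sub_nonneg.2 ht1) (add_sub_cancel t 1)

theorem ConvexOn.add_le_map_add_of_map_zero {f : ℝ → ℝ} (hf : ConvexOn ℝ (Ici 0) f)
    (hf0 : f 0 = 0) {x y : ℝ} (hx : 0 ≤ x) (hy : 0 ≤ y) : f x + f y ≤ f (x + y) := by
  rcases (add_nonneg hx hy).eq_or_lt with hxy | hxy
  · simp [(add_eq_zero_iff_of_nonneg hx hy).1 hxy.symm, hf0]
  have hscale {t : ℝ} (ht0 : 0 ≤ t) (ht : t ≤ x + y) : f t ≤ t / (x + y) * f (x + y) := by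
    have := hf.map_smul_le_of_map_zero self_mem_Ici hf0 (mem_Ici.2 hxy.le)
      (div_nonneg ht0 hxy.le) ((div_le_one hxy).2 ht)
    rwa [smul_eq_mul, div_mul_cancel₀ t hxy.ne', smul_eq_mul] at this
  calc f x + f y ≤ x / (x + y) * f (x + y) + y / (x + y) * f (x + y) :=
        add_le_add (hscale hx (by linarith)) (hscale hy (by linarith))
    _ = f (x + y) := by field_simp

theorem youngG_zero (g : ℝ → ℝ) : YoungG g 0 = 0 := intervalIntegral.integral_same

theorem youngG_monotoneOn {g : ℝ → ℝ} (hg : YoungHyp g) : MonotoneOn (YoungG g) (Ici 0) := by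
  intro x hx y hy hxy
  have hint {a b : ℝ} (ha : 0 ≤ a) (hb : 0 ≤ b) : IntervalIntegrable g volume a b :=
    (hg.2.2.1.mono (ordConnected_Ici.uIcc_subset ha hb)).intervalIntegrable
  have hgx : ∀ τ ∈ Icc x y, 0 ≤ g τ := fun τ hτ =>
    hg.1 ▸ hg.2.2.1 self_mem_Ici (mem_Ici.2 (le_trans hx hτ.1)) (le_trans hx hτ.1)
  rw [YoungG, YoungG, ← intervalIntegral.integral_add_adjacent_intervals (hint le_rfl hx)
    (hint hx hy)]
  exact le_add_of_nonneg_right (intervalIntegral.integral_nonneg hxy hgx)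

theorem youngG_nonneg_s16 {g : ℝ → ℝ} (hg : YoungHyp g) {t : ℝ} (ht : 0 ≤ t) :
    0 ≤ YoungG g t :=
  youngG_zero g ▸ youngG_monotoneOn hg self_mem_Ici ht ht

theorem youngG_abs_eq_sqrt_sq (g : ℝ → ℝ) (x : ℝ) : YoungG g |x| = YoungG g √(x ^ 2) := by
  rw [Real.sqrt_sq_eq_abs]

theorem youngG_abs_half_add_add_youngG_abs_half_sub_le {g : ℝ → ℝ} (hg2 : CondG2 g)
    (a b : ℝ) :
    YoungG g |(a + b) / 2| + YoungG g |(a - b) / 2| ≤ (YoungG g |a| + YoungG g |b|) / 2 := by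
  set H : ℝ → ℝ := fun t => YoungG g √t
  have hH0 : H 0 = 0 := by simp [H, youngG_zero]
  have hsum : ((a + b) / 2) ^ 2 + ((a - b) / 2) ^ 2 =
      (1 / 2 : ℝ) • a ^ 2 + (1 / 2 : ℝ) • b ^ 2 := by
    simp only [smul_eq_mul]; ring
  simp only [youngG_abs_eq_sqrt_sq]
  calc H (((a + b) / 2) ^ 2) + H (((a - b) / 2) ^ 2)
      ≤ H ((1 / 2 : ℝ) • a ^ 2 + (1 / 2 : ℝ) • b ^ 2) :=
        hsum ▸ hg2.add_le_map_add_of_map_zero hH0 (sq_nonneg _) (sq_nonneg _)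
    _ ≤ (1 / 2 : ℝ) • H (a ^ 2) + (1 / 2 : ℝ) • H (b ^ 2) :=
        hg2.2 (sq_nonneg a) (sq_nonneg b) (by norm_num) (by norm_num) (by norm_num)
    _ = (H (a ^ 2) + H (b ^ 2)) / 2 := by simp only [smul_eq_mul]; ring

theorem youngG_abs_half_add_div_add_youngG_abs_half_sub_div_le {g : ℝ → ℝ} (hg2 : CondG2 g)
    (a b : ℝ) {d : ℝ} (hd : 0 ≤ d) :
    YoungG g (|(a + b) / 2| / d) + YoungG g (|(a - b) / 2| / d) ≤
      (YoungG g (|a| / d) + YoungG g (|b| / d)) / 2 := by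
  have habs (x : ℝ) : |x| / d = |x / d| := by rw [abs_div, abs_of_nonneg hd]
  simp only [habs]
  convert youngG_abs_half_add_add_youngG_abs_half_sub_le hg2 (a / d) (b / d) using 4 <;> ring

def rhoIntegrand (N : ℕ) (s : ℝ) (g : ℝ → ℝ) (u : Euc N → ℝ) (z : Euc N × Euc N) :
    ℝ≥0∞ :=
  ENNReal.ofReal (YoungG g (|u z.1 - u z.2| / dist z.1 z.2 ^ s) * dist z.1 z.2 ^ (-(N : ℝ)))

theorem rho_eq_lintegral_rhoIntegrand (N : ℕ) (s : ℝ) (g : ℝ → ℝ) (u : Euc N → ℝ) :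
    rho N s g u = ∫⁻ z in Qset N, rhoIntegrand N s g u z :=
  rfl

theorem measurable_rhoIntegrand {N : ℕ} (s : ℝ) {g : ℝ → ℝ} (hg : YoungHyp g)
    {u : Euc N → ℝ} (hu : Measurable u) : Measurable (rhoIntegrand N s g u) := by
  have hG : Measurable fun t => YoungG g (max t 0) :=
    Monotone.measurable fun x y hxy => youngG_monotoneOn hg (le_max_right x 0)
      (le_max_right y 0) (max_le_max_right 0 hxy)
  have hdist : Measurable fun z : Euc N × Euc N => dist z.1 z.2 :=
    measurable_fst.dist measurable_snd
  have hquot : Measurable fun z : Euc N × Euc N => |u z.1 - u z.2| / dist z.1 z.2 ^ s :=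
    ((hu.comp measurable_fst).sub (hu.comp measurable_snd)).abs.div (hdist.pow_const s)
  have hquot_nonneg (z : Euc N × Euc N) : 0 ≤ |u z.1 - u z.2| / dist z.1 z.2 ^ s := by positivity
  have hGquot :
      Measurable fun z : Euc N × Euc N => YoungG g (|u z.1 - u z.2| / dist z.1 z.2 ^ s) := by
    simpa only [Function.comp_def, max_eq_left (hquot_nonneg _)] using hG.comp hquot
  exact (hGquot.mul (hdist.pow_const _)).ennreal_ofReal

theorem rhoIntegrand_half_add_add_half_sub_le {N : ℕ} (s : ℝ) {g : ℝ → ℝ}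
    (hg : YoungHyp g) (hg2 : CondG2 g) (u v : Euc N → ℝ) (z : Euc N × Euc N) :
    rhoIntegrand N s g (fun x => (u x + v x) / 2) z +
        rhoIntegrand N s g (fun x => (u x - v x) / 2) z ≤
      (rhoIntegrand N s g u z + rhoIntegrand N s g v z) / 2 := by
  set a := u z.1 - u z.2
  set b := v z.1 - v z.2
  set d := dist z.1 z.2 ^ s
  set c := dist z.1 z.2 ^ (-(N : ℝ))
  have hd : 0 ≤ d := by positivity
  have hc : 0 ≤ c := by positivity
  have hG (x : ℝ) : 0 ≤ YoungG g (|x| / d) * c :=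
    mul_nonneg (youngG_nonneg_s16 hg (by positivity)) hc
  have hadd : (u z.1 + v z.1) / 2 - (u z.2 + v z.2) / 2 = (a + b) / 2 := by ring
  have hsub : (u z.1 - v z.1) / 2 - (u z.2 - v z.2) / 2 = (a - b) / 2 := by ring
  simp only [rhoIntegrand, hadd, hsub]
  rw [← ENNReal.ofReal_add (hG _) (hG _), ← ENNReal.ofReal_add (hG _) (hG _),
    ← ENNReal.ofReal_ofNat 2, ← ENNReal.ofReal_div_of_pos two_pos]
  refine ENNReal.ofReal_le_ofReal ?_
  have := mul_le_mul_of_nonneg_right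
    (youngG_abs_half_add_div_add_youngG_abs_half_sub_div_le hg2 a b hd) hc
  linarith

theorem statement16_general
    (N : ℕ) (s : ℝ)
    (g : ℝ → ℝ) (hg : YoungHyp g)
    (hg2 : CondG2 g) :
    ∀ u v : Euc N → ℝ, Measurable u → Measurable v →
      rho N s g (fun x => (u x + v x) / 2) + rho N s g (fun x => (u x - v x) / 2) ≤
        (rho N s g u + rho N s g v) / 2 := by
  intro u v hu hv
  calc rho N s g (fun x => (u x + v x) / 2) + rho N s g (fun x => (u x - v x) / 2)
      = ∫⁻ z in Qset N, (rhoIntegrand N s g (fun x => (u x + v x) / 2) z +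
          rhoIntegrand N s g (fun x => (u x - v x) / 2) z) := by
        rw [rho_eq_lintegral_rhoIntegrand, rho_eq_lintegral_rhoIntegrand,
          lintegral_add_left (measurable_rhoIntegrand s hg (by fun_prop))]
    _ ≤ ∫⁻ z in Qset N, (rhoIntegrand N s g u z + rhoIntegrand N s g v z) / 2 :=
        lintegral_mono (rhoIntegrand_half_add_add_half_sub_le s hg hg2 u v)
    _ = (rho N s g u + rho N s g v) / 2 := by
        simp only [div_eq_mul_inv]
        rw [lintegral_mul_const' _ _ (by simp),
          lintegral_add_left (measurable_rhoIntegrand s hg hu), rho_eq_lintegral_rhoIntegrand,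
          rho_eq_lintegral_rhoIntegrand]

/-- modular parallelogram-type inequality, from Lemma 2.1:
`ρ((u+v)/2) + ρ((u−v)/2) ≤ (ρ(u) + ρ(v))/2` in `[0,∞]`. -/
theorem statement16
    (N : ℕ) (hN : 2 ≤ N) (s : ℝ) (hs : s ∈ Set.Ioo (0:ℝ) 1)
    (g : ℝ → ℝ) (hg : YoungHyp g)
    (qm qp : ℝ) (hcondg : CondG g qm qp) (hg2 : CondG2 g) :
    ∀ u v : Euc N → ℝ, Measurable u → Measurable v →
      rho N s g (fun x => (u x + v x) / 2) + rho N s g (fun x => (u x - v x) / 2) ≤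
        (rho N s g u + rho N s g v) / 2 :=
  statement16_general N s g hg hg2
end
end

section
/- Let v : ℝ^N → ℝ be measurable with v|_{B₁} ∈ L²(B₁), let f ∈ L²(B₁) with f ≥ 0 almost everywhere in B₁, and write v⁻(x) = max{−v(x), 0}. Assume that the integral ∬_Q g(|v(x)−v(y)|/|x−y|^s)·sgn(v(x)−v(y))·(v⁻(x)−v⁻(y))·|x−y|^(−s−N) dx dy converges absolutely and that ∬_Q g(|v(x)−v(y)|/|x−y|^s)·sgn(v(x)−v(y))·(v⁻(x)−v⁻(y))·|x−y|^(−s−N) dx dy + ∫_{B₁} v·v⁻ dx = ∫_{B₁} f·v⁻ dx. Then v ≥ 0 almost everywhere in B₁. -/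
open MeasureTheory Set Real Filter
open scoped ENNReal

noncomputable section

/-!
Since `t ↦ t⁻` is antitone, `sgn(v(x) − v(y))·(v⁻(x) − v⁻(y)) ≤ 0`, so the nonlocal term
is `≤ 0`. As `v·v⁻ = −(v⁻)²` and `∫ f v⁻ ≥ 0`, the identity gives `∫_{B₁} (v⁻)² ≤ 0`,
hence `v⁻ = 0` a.e. in `B₁`.
-/

lemma sign_sub_mul_sub_nonpos_of_antitone {ψ : ℝ → ℝ} (hψ : Antitone ψ) (a b : ℝ) :
    Real.sign (a - b) * (ψ a - ψ b) ≤ 0 := by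
  rcases lt_trichotomy a b with h | rfl | h
  · rw [Real.sign_of_neg (sub_neg.2 h)]
    linarith [hψ h.le]
  · simp
  · rw [Real.sign_of_pos (sub_pos.2 h)]
    linarith [hψ h.le]

lemma weakKernel_comp_nonpos_of_antitone {N : ℕ} {s : ℝ} {g : ℝ → ℝ}
    (hg : ∀ t, 0 ≤ t → 0 ≤ g t) (u : Euc N → ℝ) {ψ : ℝ → ℝ} (hψ : Antitone ψ)
    (z : Euc N × Euc N) : weakKernel N s g u (fun x => ψ (u x)) z ≤ 0 := by
  have hgz : 0 ≤ g (|u z.1 - u z.2| / dist z.1 z.2 ^ s) := hg _ (by positivity)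
  have hsign := sign_sub_mul_sub_nonpos_of_antitone hψ (u z.1) (u z.2)
  rw [weakKernel, mul_assoc (g _)]
  exact mul_nonpos_of_nonpos_of_nonneg (mul_nonpos_of_nonneg_of_nonpos hgz hsign)
    (Real.rpow_nonneg dist_nonneg _)

lemma antitone_max_neg_zero : Antitone fun t : ℝ => max (-t) 0 :=
  fun _ _ h => max_le_max (neg_le_neg h) le_rfl

lemma mul_max_neg_zero (a : ℝ) : a * max (-a) 0 = -max (-a) 0 ^ 2 := by
  rcases le_total a 0 with h | h
  · rw [max_eq_left (neg_nonneg.2 h)]; ring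
  · rw [max_eq_right (neg_nonpos.2 h)]; ring

lemma ae_nonneg_of_integral_sq_max_neg_nonpos {α : Type*} [MeasurableSpace α] {μ : Measure α}
    {v : α → ℝ} (hv : MemLp v 2 μ) (h : ∫ x, max (-v x) 0 ^ 2 ∂μ ≤ 0) :
    ∀ᵐ x ∂μ, 0 ≤ v x := by
  have hzero : (fun x => max (-v x) 0 ^ 2) =ᵐ[μ] 0 :=
    (integral_eq_zero_iff_of_nonneg (fun x => sq_nonneg _) hv.neg_part.integrable_sq).1
      (le_antisymm h (integral_nonneg fun x => sq_nonneg _))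
  filter_upwards [hzero] with x hx
  have : max (-v x) 0 = 0 := pow_eq_zero_iff two_ne_zero |>.1 hx
  linarith [le_max_left (-v x) 0]

theorem statement17_general
    (N : ℕ) (s : ℝ)
    (g : ℝ → ℝ) (hg0 : g 0 = 0) (hgpos : ∀ t > (0:ℝ), 0 < g t)
    (v : Euc N → ℝ)
    (hvL2 : MemLp v 2 (volume.restrict (B1 N)))
    (f : Euc N → ℝ)
    (hfpos : ∀ᵐ x ∂(volume.restrict (B1 N)), 0 ≤ f x)
    (heq : (∫ z in Qset N, weakKernel N s g v (fun x => max (-v x) 0) z) +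
        (∫ x in B1 N, v x * max (-v x) 0) =
      ∫ x in B1 N, f x * max (-v x) 0) :
    ∀ᵐ x ∂(volume.restrict (B1 N)), 0 ≤ v x := by
  have hg : ∀ t, 0 ≤ t → 0 ≤ g t := fun t ht =>
    ht.eq_or_lt.elim (fun h => h ▸ hg0.ge) fun h => (hgpos t h).le
  have hkernel : ∫ z in Qset N, weakKernel N s g v (fun x => max (-v x) 0) z ≤ 0 :=
    integral_nonpos (weakKernel_comp_nonpos_of_antitone hg v antitone_max_neg_zero)
  have hsource : 0 ≤ ∫ x in B1 N, f x * max (-v x) 0 :=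
    integral_nonneg_of_ae (hfpos.mono fun x hx => mul_nonneg hx (le_max_right _ _))
  have hlocal : ∫ x in B1 N, v x * max (-v x) 0 = -∫ x in B1 N, max (-v x) 0 ^ 2 := by
    simp only [mul_max_neg_zero, integral_neg]
  exact ae_nonneg_of_integral_sq_max_neg_nonpos hvL2 (by linarith)

/-- nonnegativity step in Lemma 3.7: testing the weak
formulation with the negative part `v⁻` forces `v ≥ 0` a.e. in `B₁`. -/
theorem statement17
    (N : ℕ) (hN : 2 ≤ N) (s : ℝ) (hs : s ∈ Set.Ioo (0:ℝ) 1)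
    (g : ℝ → ℝ) (hg0 : g 0 = 0) (hgpos : ∀ t > (0:ℝ), 0 < g t)
    (v : Euc N → ℝ) (hv : Measurable v)
    (hvL2 : MemLp v 2 (volume.restrict (B1 N)))
    (f : Euc N → ℝ) (hf : Measurable f)
    (hfL2 : MemLp f 2 (volume.restrict (B1 N)))
    (hfpos : ∀ᵐ x ∂(volume.restrict (B1 N)), 0 ≤ f x)
    (hint : IntegrableOn
      (weakKernel N s g v (fun x => max (-v x) 0)) (Qset N))
    (heq : (∫ z in Qset N, weakKernel N s g v (fun x => max (-v x) 0) z) +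
        (∫ x in B1 N, v x * max (-v x) 0) =
      ∫ x in B1 N, f x * max (-v x) 0) :
    ∀ᵐ x ∂(volume.restrict (B1 N)), 0 ≤ v x :=
  statement17_general N s g hg0 hgpos v hvL2 f hfpos heq
end
end
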